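/- arXiv:2110.03629 — 2 statements merged into one kernel-verified Lean document; each statement's English description precedes it below -/
import Mathlib

section
/- Let d ≥ 1 and let (U_k)_{k∈K} be a finite family of d×d complex unitary matrices with weights p_k ≥ 0, Σ_k p_k = 1, satisfying, for every Hermitian d×d matrix B: (i) Σ_k p_k Σ_{b=0}^{d-1} U_k† E_{bb} U_k = I, and (ii) Σ_k p_k Σ_{b=0}^{d-1} (⟨b| U_k B U_k† |b⟩)² · U_k† E_{bb} U_k = [ (Tr B)² I + 2 (Tr B) B + 2 B² + Tr(B²) I ] / ((d+1)(d+2)). Then for every Hermitian d×d matrix O, writing O' = (d+1)O − Tr(O)·I, one has the Loewner-order inequality Σ_k p_k Σ_{b=0}^{d-1} (⟨b| U_k O' U_k† |b⟩)² · U_k† E_{bb} U_k ⪯ 2·𝒮(O). -/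
open Matrix Kronecker BigOperators
open scoped ComplexOrder

/-- `𝒮(O) := 2·{ [2·(Tr O)² + Tr(O²)]·I + 2·(Tr O)·O + 2·O² }`. -/
noncomputable def Smat {d : ℕ} (O : Matrix (Fin d) (Fin d) ℂ) : Matrix (Fin d) (Fin d) ℂ :=
  (2 : ℂ) • ((2 * (Matrix.trace O) ^ 2 + Matrix.trace (O * O)) • (1 : Matrix (Fin d) (Fin d) ℂ)
    + (2 * Matrix.trace O) • O + (2 : ℂ) • (O * O))

/-!
Since the 3-design identity holds for every Hermitian `B`, apply it to `B = O'` itself: the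
third-moment sum becomes an explicit quadratic polynomial in `O`, and `2·𝒮(O)` minus it is
`α O² + β O + γ I` with `α > 0` and `β² ≤ 4αγ` (using `Tr O ∈ ℝ` and `Tr O² ≥ 0`). Completing
the square exhibits it as `α (O + β/(2α))² + (γ - β²/(4α)) I ⪰ 0`.
-/

namespace Matrix

variable {n : Type*} [Fintype n]

lemma IsHermitian.exists_trace_eq_ofReal {A : Matrix n n ℂ} (hA : A.IsHermitian) :
    ∃ t : ℝ, A.trace = t :=
  Complex.conj_eq_iff_real.mp <| by rw [← Complex.star_def, ← trace_conjTranspose, hA.eq]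

lemma IsHermitian.exists_trace_mul_self_eq_ofReal {A : Matrix n n ℂ} (hA : A.IsHermitian) :
    ∃ s : ℝ, 0 ≤ s ∧ (A * A).trace = s := by
  have hnonneg : 0 ≤ (A * A).trace := by
    simpa only [hA.eq] using (posSemidef_conjTranspose_mul_self A).trace_nonneg
  refine ⟨(A * A).trace.re, ?_, Complex.eq_re_of_ofReal_le (r := 0) (by simpa using hnonneg)⟩
  exact (Complex.nonneg_iff.mp hnonneg).1

lemma IsHermitian.posSemidef_quadratic [DecidableEq n] {A : Matrix n n ℂ} (hA : A.IsHermitian)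
    {a b c : ℝ} (ha : 0 < a) (hdisc : b ^ 2 ≤ 4 * a * c) :
    ((a : ℂ) • (A * A) + (b : ℂ) • A + (c : ℂ) • 1).PosSemidef := by
  set M := A + ((b / (2 * a) : ℝ) : ℂ) • 1
  have hM : Mᴴ = M := by simp [M, hA.eq, conjTranspose_smul]
  have hsquare : (a : ℂ) • (A * A) + (b : ℂ) • A + (c : ℂ) • 1
      = (a : ℂ) • (Mᴴ * M) + ((c - b ^ 2 / (4 * a) : ℝ) : ℂ) • 1 := by
    rw [hM]
    simp only [M, add_mul, mul_add, Matrix.smul_mul, Matrix.mul_smul, one_mul, mul_one, smul_smul]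
    push_cast
    match_scalars <;> field_simp <;> ring
  rw [hsquare]
  refine ((posSemidef_conjTranspose_mul_self M).smul ?_).add (PosSemidef.one.smul ?_)
  · exact Complex.zero_le_real.mpr ha.le
  · refine Complex.zero_le_real.mpr (sub_nonneg.mpr ?_)
    rwa [div_le_iff₀ (by positivity), mul_comm]

end Matrix

/-- The value of `∑ₖ pₖ ∑_b ⟨b|Uₖ B Uₖ†|b⟩² Uₖ† E_bb Uₖ` on a unitary 3-design. -/
noncomputable def designThirdMoment {d : ℕ} (B : Matrix (Fin d) (Fin d) ℂ) :
    Matrix (Fin d) (Fin d) ℂ :=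
  (((d : ℂ) + 1) * ((d : ℂ) + 2))⁻¹ •
    (((trace B) ^ 2 + trace (B * B)) • (1 : Matrix (Fin d) (Fin d) ℂ)
      + (2 * trace B) • B + (2 : ℂ) • (B * B))

lemma two_smul_Smat_sub_designThirdMoment {d : ℕ} {O : Matrix (Fin d) (Fin d) ℂ} {t s : ℝ}
    (ht : O.trace = t) (hs : (O * O).trace = s) :
    (2 : ℂ) • Smat O - designThirdMoment (((d : ℂ) + 1) • O - trace O • 1)
      = (((6 * d + 14) / (d + 2) : ℝ) : ℂ) • (O * O) + (((8 * d + 18) * t / (d + 2) : ℝ) : ℂ) • O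
        + ((((8 * d + 17) * t ^ 2 + (3 * d + 7) * s) / (d + 2) : ℝ) : ℂ) • 1 := by
  have hd : ((d : ℂ) + 2) ≠ 0 := by exact_mod_cast Nat.succ_ne_zero (d + 1)
  have hsq : (((d : ℂ) + 1) • O - trace O • 1) * (((d : ℂ) + 1) • O - trace O • 1)
      = ((d : ℂ) + 1) ^ 2 • (O * O) - (2 * ((d : ℂ) + 1) * t) • O + (t : ℂ) ^ 2 • 1 := by
    simp only [sub_mul, mul_sub, Matrix.smul_mul, Matrix.mul_smul, one_mul, mul_one, smul_smul, ht]
    module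
  have htr : trace (((d : ℂ) + 1) • O - trace O • (1 : Matrix (Fin d) (Fin d) ℂ)) = t := by
    simp only [trace_sub, trace_smul, trace_one, ht, Fintype.card_fin, smul_eq_mul]
    ring
  rw [designThirdMoment, Smat, hsq, htr]
  simp only [trace_add, trace_sub, trace_smul, trace_one, ht, hs, Fintype.card_fin, smul_eq_mul]
  push_cast
  match_scalars <;> field_simp <;> ring

theorem stmt_0_general {d : ℕ} {K : Type} [Fintype K]
    (U : K → Matrix (Fin d) (Fin d) ℂ) (p : K → ℝ)
    (h3 : ∀ B : Matrix (Fin d) (Fin d) ℂ, B.IsHermitian →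
      ∑ k, (p k : ℂ) • (∑ b : Fin d,
          ((U k * B * (U k)ᴴ) b b) ^ 2 • ((U k)ᴴ * Matrix.single b b 1 * U k))
        = (((d : ℂ) + 1) * ((d : ℂ) + 2))⁻¹ •
            (((Matrix.trace B) ^ 2 + Matrix.trace (B * B)) • (1 : Matrix (Fin d) (Fin d) ℂ)
              + (2 * Matrix.trace B) • B + (2 : ℂ) • (B * B)))
    (O : Matrix (Fin d) (Fin d) ℂ) (hO : O.IsHermitian) :
    ((2 : ℂ) • Smat O
      - ∑ k, (p k : ℂ) • (∑ b : Fin d,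
          ((U k * (((d : ℂ) + 1) • O - Matrix.trace O • 1) * (U k)ᴴ) b b) ^ 2 •
            ((U k)ᴴ * Matrix.single b b 1 * U k))).PosSemidef := by
  obtain ⟨t, ht⟩ := hO.exists_trace_eq_ofReal
  obtain ⟨s, hs_nonneg, hs⟩ := hO.exists_trace_mul_self_eq_ofReal
  have hB : (((d : ℂ) + 1) • O - trace O • 1).IsHermitian := by
    simp [IsHermitian, conjTranspose_sub, conjTranspose_smul, hO.eq, ht]
  rw [h3 _ hB, ← designThirdMoment, two_smul_Smat_sub_designThirdMoment ht hs]
  refine hO.posSemidef_quadratic (by positivity) ?_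
  rw [div_pow, ← sub_nonneg]
  field_simp
  nlinarith [sq_nonneg t]

/-- Lemma 1: for any weighted family of unitaries satisfying the first- and third-moment
identities of a unitary 3-design, the shadow-norm-type sum of the inverted observable
`O' = (d+1)O − Tr(O)·I` is dominated (in the Loewner order) by `2·𝒮(O)`. -/
theorem stmt_0 {d : ℕ} (hd : 1 ≤ d) {K : Type} [Fintype K]
    (U : K → Matrix (Fin d) (Fin d) ℂ) (p : K → ℝ)
    (hU : ∀ k, U k ∈ Matrix.unitaryGroup (Fin d) ℂ)
    (hp : ∀ k, 0 ≤ p k) (hpsum : ∑ k, p k = 1)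
    (h1 : ∑ k, (p k : ℂ) •
        (∑ b : Fin d, (U k)ᴴ * Matrix.single b b 1 * U k) = 1)
    (h3 : ∀ B : Matrix (Fin d) (Fin d) ℂ, B.IsHermitian →
      ∑ k, (p k : ℂ) • (∑ b : Fin d,
          ((U k * B * (U k)ᴴ) b b) ^ 2 • ((U k)ᴴ * Matrix.single b b 1 * U k))
        = (((d : ℂ) + 1) * ((d : ℂ) + 2))⁻¹ •
            (((Matrix.trace B) ^ 2 + Matrix.trace (B * B)) • (1 : Matrix (Fin d) (Fin d) ℂ)
              + (2 * Matrix.trace B) • B + (2 : ℂ) • (B * B)))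
    (O : Matrix (Fin d) (Fin d) ℂ) (hO : O.IsHermitian) :
    ((2 : ℂ) • Smat O
      - ∑ k, (p k : ℂ) • (∑ b : Fin d,
          ((U k * (((d : ℂ) + 1) • O - Matrix.trace O • 1) * (U k)ᴴ) b b) ^ 2 •
            ((U k)ᴴ * Matrix.single b b 1 * U k))).PosSemidef :=
  stmt_0_general U p h3 O hO
end

section
/- Let K₁,…,K_r be d×d complex matrices with Σ_{a=1}^{r} K_a† K_a = I_d, and let η := Σ_{i,j=0}^{d-1} E_{ij} ⊗ ( Σ_a K_a E_{ij} K_a† ). If Tr(η²) = d², then the channel is unitary: there exists a d×d unitary U such that Σ_a K_a M K_a† = U M U† for every d×d complex matrix M. -/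
/-!
Column-stacking the Kraus operators gives vectors `v_a` with `η = Σ_a v_a v_a†`, hence
`Tr η² = Σ_{a,b} |⟨v_a, v_b⟩|²`, while trace preservation gives `Σ_a ‖v_a‖² = d`. Cauchy–Schwarz
bounds `Tr η²` by `(Σ_a ‖v_a‖²)² = d²`, with equality only if all `v_a` are parallel. Then every
Kraus operator is a multiple `c_a W` of one matrix, `(Σ_a |c_a|²) W†W = 1`, and
`U = (Σ_a |c_a|²)^{1/2} W`.
-/

open Matrix Kronecker BigOperators

/-- The (unnormalized) Choi matrix `η = Σ_{i,j} E_{ij} ⊗ (Σ_a K_a E_{ij} K_a†)`. -/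
noncomputable def choi {d r : ℕ} (K : Fin r → Matrix (Fin d) (Fin d) ℂ) :
    Matrix (Fin d × Fin d) (Fin d × Fin d) ℂ :=
  ∑ i : Fin d, ∑ j : Fin d,
    (Matrix.single i j 1) ⊗ₖ (∑ a, K a * Matrix.single i j 1 * (K a)ᴴ)

section CauchySchwarz

variable {𝕜 E ι : Type*} [RCLike 𝕜] [NormedAddCommGroup E] [InnerProductSpace 𝕜 E] [Fintype ι]

theorem norm_inner_eq_mul_norm_of_sum_norm_inner_sq_eq {v : ι → E}
    (h : ∑ a, ∑ b, ‖inner 𝕜 (v a) (v b)‖ ^ 2 = (∑ a, ‖v a‖ ^ 2) ^ 2) (a b : ι) :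
    ‖inner 𝕜 (v a) (v b)‖ = ‖v a‖ * ‖v b‖ := by
  have hle : ∀ p ∈ (Finset.univ : Finset (ι × ι)),
      ‖inner 𝕜 (v p.1) (v p.2)‖ ^ 2 ≤ (‖v p.1‖ * ‖v p.2‖) ^ 2 :=
    fun p _ => pow_le_pow_left₀ (norm_nonneg _) (norm_inner_le_norm _ _) 2
  have hsum : ∑ p : ι × ι, ‖inner 𝕜 (v p.1) (v p.2)‖ ^ 2 =
      ∑ p : ι × ι, (‖v p.1‖ * ‖v p.2‖) ^ 2 := by
    rw [Fintype.sum_prod_type, Fintype.sum_prod_type, h, sq, Finset.sum_mul_sum]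
    simp only [mul_pow]
  have := (Finset.sum_eq_sum_iff_of_le hle).mp hsum (a, b) (Finset.mem_univ _)
  exact (pow_left_inj₀ (norm_nonneg _) (by positivity) two_ne_zero).mp this

theorem exists_eq_smul_of_norm_inner_eq_mul_norm {v : ι → E}
    (h : ∀ a b, ‖inner 𝕜 (v a) (v b)‖ = ‖v a‖ * ‖v b‖) :
    ∃ (u : E) (c : ι → 𝕜), ∀ a, v a = c a • u := by
  by_cases hv : ∃ a₀, v a₀ ≠ 0
  · obtain ⟨a₀, ha₀⟩ := hv
    have hpar (a : ι) : ∃ c : 𝕜, v a = c • v a₀ :=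
      Or.resolve_left (((norm_inner_eq_norm_tfae 𝕜 (v a₀) (v a)).out 0 2).mp (h a₀ a)) ha₀
    choose c hc using hpar
    exact ⟨v a₀, c, hc⟩
  · push Not at hv
    exact ⟨0, 0, fun a => by simp [hv a]⟩

end CauchySchwarz

section ColumnStacking

variable {m n ι : Type*}

/-- Indexed by (column, row), so that `Σ_a vec(K_a) vec(K_a)†` has the index order of `choi`. -/
def colStack : Matrix m n ℂ ≃ₗ[ℂ] EuclideanSpace ℂ (n × m) where
  toFun A := WithLp.toLp 2 fun p => A p.2 p.1
  invFun v := Matrix.of fun i j => v (j, i)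
  map_add' _ _ := rfl
  map_smul' _ _ := rfl
  left_inv _ := rfl
  right_inv _ := rfl

@[simp]
theorem colStack_apply (A : Matrix m n ℂ) (p : n × m) : colStack A p = A p.2 p.1 := rfl

variable [Fintype m] [Fintype n] [Fintype ι]

theorem ofReal_norm_colStack_sq (A : Matrix m n ℂ) :
    ((‖colStack A‖ ^ 2 : ℝ) : ℂ) = trace (Aᴴ * A) := by
  rw [EuclideanSpace.norm_sq_eq]
  push_cast
  simp [trace, mul_apply, Fintype.sum_prod_type, Complex.conj_mul']

theorem trace_sum_vecMulVec_star_mul_self (v : ι → EuclideanSpace ℂ n) :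
    trace ((∑ a, vecMulVec (v a).ofLp (star (v a).ofLp)) *
        ∑ a, vecMulVec (v a).ofLp (star (v a).ofLp)) =
      ∑ a, ∑ b, ((‖inner ℂ (v a) (v b)‖ ^ 2 : ℝ) : ℂ) := by
  simp only [Finset.sum_mul_sum, trace_sum, vecMulVec_mul_vecMulVec, trace_vecMulVec]
  refine Finset.sum_congr rfl fun a _ => Finset.sum_congr rfl fun b _ => ?_
  rw [dotProduct_smul, smul_eq_mul, Complex.ofReal_pow, ← Complex.mul_conj',
    EuclideanSpace.inner_eq_star_dotProduct, dotProduct_comm, starRingEnd_apply,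
    dotProduct_star (v a).ofLp]

end ColumnStacking

theorem choi_eq_sum_vecMulVec {d r : ℕ} (K : Fin r → Matrix (Fin d) (Fin d) ℂ) :
    choi K = ∑ a, vecMulVec (colStack (K a)).ofLp (star (colStack (K a)).ofLp) := by
  ext ⟨i, k⟩ ⟨j, l⟩
  simp [choi, Matrix.sum_apply, Matrix.mul_apply, Matrix.single, vecMulVec_apply,
    ite_and, mul_ite, Finset.sum_ite_eq, Finset.sum_ite_eq']

theorem exists_unitary_of_kraus_eq_smul {n ι : Type*} [Fintype n] [DecidableEq n] [Fintype ι]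
    (W : Matrix n n ℂ) (c : ι → ℂ) (hK : ∑ a, (c a • W)ᴴ * (c a • W) = 1) :
    ∃ U ∈ unitaryGroup n ℂ, ∀ M, ∑ a, c a • W * M * (c a • W)ᴴ = U * M * Uᴴ := by
  set s : ℝ := ∑ a, ‖c a‖ ^ 2
  have hweight (X : Matrix n n ℂ) : ∑ a, (c a * star (c a)) • X = (s : ℂ) • X := by
    simp only [← Finset.sum_smul, Complex.star_def, Complex.mul_conj', s]
    push_cast
    rfl
  have hsqrt : (Real.sqrt s : ℂ) * star (Real.sqrt s : ℂ) = s := by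
    rw [Complex.star_def, Complex.conj_ofReal, ← Complex.ofReal_mul,
      Real.mul_self_sqrt (by positivity)]
  have hWW : (s : ℂ) • (Wᴴ * W) = 1 := by
    rw [← hK, ← hweight]
    refine Finset.sum_congr rfl fun a _ => ?_
    rw [conjTranspose_smul, smul_mul_smul_comm, mul_comm]
  refine ⟨(Real.sqrt s : ℂ) • W, ?_, fun M => ?_⟩
  · rw [mem_unitaryGroup_iff', star_eq_conjTranspose, conjTranspose_smul, smul_mul_smul_comm,
      mul_comm, hsqrt, hWW]
  · have hsandwich (x : ℂ) : x • W * M * (x • W)ᴴ = (x * star x) • (W * M * Wᴴ) := by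
      rw [conjTranspose_smul, smul_mul_assoc, smul_mul_assoc, mul_smul_comm, smul_smul]
    simp only [hsandwich, hsqrt, hweight]

/-- If the Choi matrix of a trace-preserving channel satisfies `Tr(η²) = d²`, then
the channel is unitary: `Σ_a K_a M K_a† = U M U†` for some unitary `U` and all `M`. -/
theorem stmt_11 {d r : ℕ} (K : Fin r → Matrix (Fin d) (Fin d) ℂ)
    (hK : ∑ a, (K a)ᴴ * K a = 1)
    (hpure : Matrix.trace (choi K * choi K) = (d : ℂ) ^ 2) :
    ∃ U : Matrix (Fin d) (Fin d) ℂ, U ∈ Matrix.unitaryGroup (Fin d) ℂ ∧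
      ∀ M : Matrix (Fin d) (Fin d) ℂ, ∑ a, K a * M * (K a)ᴴ = U * M * Uᴴ := by
  set v : Fin r → EuclideanSpace ℂ (Fin d × Fin d) := fun a => colStack (K a)
  have hnorm : ((∑ a, ‖v a‖ ^ 2 : ℝ) : ℂ) = d := by
    rw [Complex.ofReal_sum]
    simp only [v, ofReal_norm_colStack_sq, ← trace_sum, hK, trace_one, Fintype.card_fin]
  have hequal : ∑ a, ∑ b, ‖inner ℂ (v a) (v b)‖ ^ 2 = (∑ a, ‖v a‖ ^ 2) ^ 2 := by
    have := trace_sum_vecMulVec_star_mul_self v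
    rw [← choi_eq_sum_vecMulVec, hpure, ← hnorm] at this
    exact_mod_cast this.symm
  obtain ⟨u, c, hc⟩ := exists_eq_smul_of_norm_inner_eq_mul_norm
    (norm_inner_eq_mul_norm_of_sum_norm_inner_sq_eq hequal)
  obtain rfl : K = fun a => c a • colStack.symm u :=
    funext fun a => by rw [← map_smul, ← hc a, LinearEquiv.symm_apply_apply]
  exact exists_unitary_of_kraus_eq_smul _ _ hK
end
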